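/- Termination bound for the Sinkhorn iteration with the fixed initial vectors: assume a dual-optimal triple exists and let K := min_{j≤m1, l≤m3} Σ_{k≤m2} K^(1)_{jk} K^(2)_{kl}. Then for every δ > 0 there exists n ∈ ℕ with n ≤ 1 + (4/δ²)·log(‖K^(1)‖₁·‖K^(2)‖₁ / K) such that S_n ≤ δ. -/

import Mathlib

/-!
The Sinkhorn iteration is block-coordinate ascent on the dual `L`, written in the multiplicative
variables `u = exp(f/ε)`. The update of `u²` raises `L/ε` by exactly `Σ_k (√p_k - √q_k)²`, where
`p` and `q` are the column sums of `P¹` and the row sums of `P²`, and the updates of `u¹` and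
`u³` do not decrease it. After these updates `P¹` has row sums `a` and `P²` column sums `b`, so
`S_n ≤ Σ_k (√p_k + √q_k) |√p_k - √q_k|`, and Cauchy–Schwarz gives `S_n² ≤ 4 Σ_k (√p_k - √q_k)²`.
Since `L/ε` starts at `-log(‖K¹‖₁‖K²‖₁) - 2` and never exceeds `-log K - 2`, at most
`(4/δ²) log(‖K¹‖₁‖K²‖₁/K)` iterates `n ≥ 1` can have `S_n > δ`.
-/

open Matrix Finset Real

noncomputable section

/-- The Hilbert projective (pseudo)metric on the positive orthant:
`d_H(u,v) = log((max_i u_i/v_i) · (max_j v_j/u_j))`. -/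
def dH {m : ℕ} (u v : Fin m → ℝ) : ℝ :=
  Real.log ((⨆ i, u i / v i) * (⨆ j, v j / u j))

/-- Birkhoff's ratio `γ(A) = max_{i,j,k,l} (A_{ik}A_{jl})/(A_{jk}A_{il})`. -/
def birkhoffGamma {n m : ℕ} (A : Matrix (Fin n) (Fin m) ℝ) : ℝ :=
  ⨆ p : (Fin n × Fin n) × Fin m × Fin m,
    A p.1.1 p.2.1 * A p.1.2 p.2.2 / (A p.1.2 p.2.1 * A p.1.1 p.2.2)

/-- Birkhoff's contraction coefficient `λ(A) = (√γ(A) − 1)/(√γ(A) + 1)`. -/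
def birkhoffLambda {n m : ℕ} (A : Matrix (Fin n) (Fin m) ℝ) : ℝ :=
  (Real.sqrt (birkhoffGamma A) - 1) / (Real.sqrt (birkhoffGamma A) + 1)

/-- The dual (Lagrangian) function for the sequentially composed OT problem with `M = 2`. -/
def dual2 {m1 m2 m3 : ℕ} (a : Fin m1 → ℝ) (b : Fin m3 → ℝ) (ε : ℝ)
    (C1 : Matrix (Fin m1) (Fin m2) ℝ) (C2 : Matrix (Fin m2) (Fin m3) ℝ)
    (f1 : Fin m1 → ℝ) (f2 : Fin m2 → ℝ) (f3 : Fin m3 → ℝ) : ℝ :=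
  (∑ j, f1 j * a j) + (∑ l, f3 l * b l)
    - ε * ((∑ j, ∑ k, Real.exp ((f1 j - f2 k - C1 j k) / ε))
      + ∑ k, ∑ l, Real.exp ((f2 k + f3 l - C2 k l) / ε))

/-- The matrix `diag(u) K diag(1/v)` induced by the first pair of Sinkhorn vectors. -/
def indMat1 {m1 m2 : ℕ} (u : Fin m1 → ℝ) (K : Matrix (Fin m1) (Fin m2) ℝ)
    (v : Fin m2 → ℝ) : Matrix (Fin m1) (Fin m2) ℝ :=
  Matrix.diagonal u * K * Matrix.diagonal (fun k => (v k)⁻¹)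

/-- The matrix `diag(v) K diag(w)` induced by the second pair of Sinkhorn vectors. -/
def indMat2 {m2 m3 : ℕ} (v : Fin m2 → ℝ) (K : Matrix (Fin m2) (Fin m3) ℝ)
    (w : Fin m3 → ℝ) : Matrix (Fin m2) (Fin m3) ℝ :=
  Matrix.diagonal v * K * Matrix.diagonal w


section InducedMatrices

variable {m1 m2 : ℕ}

lemma indMat1_apply (u : Fin m1 → ℝ) (K : Matrix (Fin m1) (Fin m2) ℝ) (v : Fin m2 → ℝ)
    (j : Fin m1) (k : Fin m2) : indMat1 u K v j k = u j * K j k * (v k)⁻¹ := by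
  simp [indMat1, mul_diagonal, diagonal_mul]

lemma indMat2_apply (v : Fin m1 → ℝ) (K : Matrix (Fin m1) (Fin m2) ℝ) (w : Fin m2 → ℝ)
    (k : Fin m1) (l : Fin m2) : indMat2 v K w k l = v k * K k l * w l := by
  simp [indMat2, mul_diagonal, diagonal_mul]

lemma indMat1_mulVec_one (u : Fin m1 → ℝ) (K : Matrix (Fin m1) (Fin m2) ℝ) (v : Fin m2 → ℝ) :
    indMat1 u K v *ᵥ 1 = u * (K *ᵥ v⁻¹) := by
  ext j
  simp [mulVec, dotProduct, indMat1_apply, mul_sum, mul_assoc]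

lemma indMat1_transpose_mulVec_one (u : Fin m1 → ℝ) (K : Matrix (Fin m1) (Fin m2) ℝ)
    (v : Fin m2 → ℝ) : (indMat1 u K v)ᵀ *ᵥ 1 = (Kᵀ *ᵥ u) / v := by
  ext k
  simp only [mulVec, dotProduct, indMat1_apply, transpose_apply, Pi.one_apply, mul_one,
    Pi.div_apply, div_eq_mul_inv, sum_mul, mul_comm (K _ k)]

lemma indMat2_mulVec_one (v : Fin m1 → ℝ) (K : Matrix (Fin m1) (Fin m2) ℝ) (w : Fin m2 → ℝ) :
    indMat2 v K w *ᵥ 1 = v * (K *ᵥ w) := by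
  ext k
  simp [mulVec, dotProduct, indMat2_apply, mul_sum, mul_assoc]

lemma indMat2_transpose_mulVec_one (v : Fin m1 → ℝ) (K : Matrix (Fin m1) (Fin m2) ℝ)
    (w : Fin m2 → ℝ) : (indMat2 v K w)ᵀ *ᵥ 1 = w * (Kᵀ *ᵥ v) := by
  ext l
  simp [mulVec, dotProduct, indMat2_apply, mul_sum, mul_comm, mul_left_comm]

end InducedMatrices

namespace Sinkhorn

lemma mul_log_sub_mul_le {a c x : ℝ} (ha : 0 < a) (hc : 0 < c) (hx : 0 < x) :
    a * log x - x * c ≤ a * log (a / c) - a := by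
  have h := log_le_sub_one_of_pos (show 0 < x * c / a by positivity)
  rw [log_div (by positivity) ha.ne', log_mul hx.ne' hc.ne'] at h
  rw [log_div ha.ne' hc.ne']
  have : a * (log x + log c - log a) ≤ a * (x * c / a - 1) := mul_le_mul_of_nonneg_left h ha.le
  rw [mul_sub _ _ (1:ℝ), mul_one, mul_div_cancel₀ _ ha.ne'] at this
  linarith

lemma div_sqrt_div_add_sqrt_div_mul {A B : ℝ} (hA : 0 < A) (hB : 0 < B) :
    A / √(A / B) + √(A / B) * B = 2 * √(A * B) := by
  rw [sqrt_div' _ hB.le, sqrt_mul hA.le]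
  have hA' := mul_self_sqrt hA.le
  have hB' := mul_self_sqrt hB.le
  have : 0 < √A := sqrt_pos.2 hA
  have : 0 < √B := sqrt_pos.2 hB
  field_simp
  nlinarith

lemma div_add_mul_eq_two_sqrt_mul_add_sq {A B w : ℝ} (hA : 0 ≤ A) (hB : 0 ≤ B) (hw : 0 < w) :
    A / w + w * B = 2 * √(A * B) + (√(A / w) - √(w * B)) ^ 2 := by
  have hAB : √(A / w) * √(w * B) = √(A * B) := by
    rw [← sqrt_mul (by positivity)]
    congr 1
    field_simp
  rw [sub_sq, sq_sqrt (by positivity), sq_sqrt (by positivity), mul_assoc, hAB]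
  ring


lemma mulVec_pos {m n : Type*} [Fintype n] [Nonempty n] {A : Matrix m n ℝ} {x : n → ℝ}
    (hA : ∀ i k, 0 < A i k) (hx : ∀ k, 0 < x k) (i : m) : 0 < (A *ᵥ x) i :=
  sum_pos (fun k _ => mul_pos (hA i k) (hx k)) univ_nonempty

variable {ι κ μ : Type*} [Fintype ι] [Fintype κ] [Fintype μ]

lemma dotProduct_log_sub_dotProduct_le {a c x : ι → ℝ} (ha : ∀ j, 0 < a j) (hc : ∀ j, 0 < c j)
    (hx : ∀ j, 0 < x j) :
    a ⬝ᵥ (fun j => log (x j)) - x ⬝ᵥ c ≤ a ⬝ᵥ (fun j => log (a j / c j)) - ∑ j, a j := by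
  simp only [dotProduct, ← sum_sub_distrib]
  exact sum_le_sum fun j _ => mul_log_sub_mul_le (ha j) (hc j) (hx j)

lemma dotProduct_log_add_dotProduct_log_le {a : ι → ℝ} {b : μ → ℝ} {x : ι → ℝ} {y : μ → ℝ}
    {c : ℝ} (ha : ∀ j, 0 ≤ a j) (hb : ∀ l, 0 ≤ b l) (hasum : ∑ j, a j = 1)
    (hbsum : ∑ l, b l = 1) (hx : ∀ j, 0 < x j) (hy : ∀ l, 0 < y l) (hc : 0 < c)
    (hxy : ∀ j l, x j * y l * c ≤ 1) :
    a ⬝ᵥ (fun j => log (x j)) + b ⬝ᵥ (fun l => log (y l)) ≤ -log c := by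
  have hlog : ∀ j l, log (x j) + log (y l) ≤ -log c := fun j l => by
    have := log_nonpos (by have := hx j; have := hy l; positivity) (hxy j l)
    rw [log_mul (mul_pos (hx j) (hy l)).ne' hc.ne', log_mul (hx j).ne' (hy l).ne'] at this
    linarith
  have hsplit : a ⬝ᵥ (fun j => log (x j)) + b ⬝ᵥ (fun l => log (y l))
      = ∑ j, ∑ l, a j * b l * (log (x j) + log (y l)) := by
    simp only [dotProduct]
    rw [← mul_one (∑ j, a j * log (x j)), ← hbsum, ← one_mul (∑ l, b l * log (y l)), ← hasum,
      sum_mul_sum, sum_mul_sum, ← sum_add_distrib]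
    refine sum_congr rfl fun j _ => ?_
    rw [← sum_add_distrib]
    exact sum_congr rfl fun l _ => by ring
  calc _ = ∑ j, ∑ l, a j * b l * (log (x j) + log (y l)) := hsplit
    _ ≤ ∑ j, ∑ l, a j * b l * -log c := sum_le_sum fun j _ => sum_le_sum fun l _ =>
      mul_le_mul_of_nonneg_left (hlog j l) (mul_nonneg (ha j) (hb l))
    _ = -log c := by
      simp_rw [← sum_mul, ← sum_mul_sum, hasum, hbsum, one_mul]

lemma sum_mul_le_sum_mul_sum {x y : κ → ℝ} (hx : ∀ k, 0 ≤ x k) (hy : ∀ k, 0 ≤ y k) :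
    ∑ k, x k * y k ≤ (∑ k, x k) * ∑ k, y k := by
  rw [sum_mul]
  exact sum_le_sum fun k _ =>
    mul_le_mul_of_nonneg_left (single_le_sum (fun k _ => hy k) (mem_univ k)) (hx k)

section Dual

variable (K1 : Matrix ι κ ℝ) (K2 : Matrix κ μ ℝ) (a : ι → ℝ) (b : μ → ℝ)

/-- `L(ε log v, ε log w, ε log z) / ε`: the dual in the multiplicative variables of the
iteration. -/
def dual (v : ι → ℝ) (w : κ → ℝ) (z : μ → ℝ) : ℝ :=
  a ⬝ᵥ (fun j => log (v j)) + b ⬝ᵥ (fun l => log (z l)) - v ⬝ᵥ (K1 *ᵥ w⁻¹) - w ⬝ᵥ (K2 *ᵥ z)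

def midUpdate (v : ι → ℝ) (z : μ → ℝ) : κ → ℝ :=
  fun k => √((K1ᵀ *ᵥ v) k / (K2 *ᵥ z) k)

def leftUpdate (w : κ → ℝ) : ι → ℝ := fun j => a j / (K1 *ᵥ w⁻¹) j

def rightUpdate (w : κ → ℝ) : μ → ℝ := fun l => b l / (K2ᵀ *ᵥ w) l

end Dual

/-- Twice the squared Hellinger distance when `p` and `q` are probability vectors. -/
def hellingerSq (p q : κ → ℝ) : ℝ := ∑ k, (√(p k) - √(q k)) ^ 2

variable {K1 : Matrix ι κ ℝ} {K2 : Matrix κ μ ℝ} {a : ι → ℝ} {b : μ → ℝ}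

lemma dotProduct_mulVec_inv (v : ι → ℝ) (w : κ → ℝ) :
    v ⬝ᵥ (K1 *ᵥ w⁻¹) = ∑ k, (K1ᵀ *ᵥ v) k / w k := by
  rw [dotProduct_mulVec, ← mulVec_transpose]
  rfl

lemma dotProduct_mulVec_eq_dotProduct_transpose (w : κ → ℝ) (z : μ → ℝ) :
    w ⬝ᵥ (K2 *ᵥ z) = z ⬝ᵥ (K2ᵀ *ᵥ w) := by
  rw [dotProduct_mulVec, ← mulVec_transpose, dotProduct_comm]

lemma dual_midUpdate [Nonempty ι] [Nonempty μ] (hK1 : ∀ j k, 0 < K1 j k)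
    (hK2 : ∀ k l, 0 < K2 k l) {v : ι → ℝ} {w : κ → ℝ} {z : μ → ℝ} (hv : ∀ j, 0 < v j)
    (hw : ∀ k, 0 < w k) (hz : ∀ l, 0 < z l) :
    dual K1 K2 a b v (midUpdate K1 K2 v z) z
      = dual K1 K2 a b v w z + hellingerSq ((K1ᵀ *ᵥ v) / w) (w * (K2 *ᵥ z)) := by
  have hA := mulVec_pos (A := K1ᵀ) (fun k j => hK1 j k) hv
  have hB := mulVec_pos hK2 hz
  have key : ∀ k, (K1ᵀ *ᵥ v) k / w k + w k * (K2 *ᵥ z) k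
      = (K1ᵀ *ᵥ v) k / midUpdate K1 K2 v z k + midUpdate K1 K2 v z k * (K2 *ᵥ z) k
        + (√(((K1ᵀ *ᵥ v) / w) k) - √((w * (K2 *ᵥ z)) k)) ^ 2 := fun k => by
    rw [midUpdate, div_sqrt_div_add_sqrt_div_mul (hA k) (hB k),
      div_add_mul_eq_two_sqrt_mul_add_sq (hA k).le (hB k).le (hw k)]
    rfl
  have hsum := sum_congr rfl fun k (_ : k ∈ univ) => key k
  simp only [sum_add_distrib] at hsum
  rw [dual, dual, dotProduct_mulVec_inv, dotProduct_mulVec_inv, hellingerSq]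
  simp only [dotProduct]
  linarith

omit [Fintype ι] in
lemma mulVec_inv_pos [Nonempty κ] (hK1 : ∀ j k, 0 < K1 j k) {w : κ → ℝ} (hw : ∀ k, 0 < w k)
    (j : ι) : 0 < (K1 *ᵥ w⁻¹) j :=
  mulVec_pos (x := w⁻¹) hK1 (fun k => inv_pos.2 (hw k)) j

omit [Fintype ι] in
lemma leftUpdate_pos [Nonempty κ] (hK1 : ∀ j k, 0 < K1 j k) (ha : ∀ j, 0 < a j) {w : κ → ℝ}
    (hw : ∀ k, 0 < w k) (j : ι) : 0 < leftUpdate K1 a w j :=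
  div_pos (ha j) (mulVec_inv_pos hK1 hw j)

omit [Fintype μ] in
lemma rightUpdate_pos [Nonempty κ] (hK2 : ∀ k l, 0 < K2 k l) (hb : ∀ l, 0 < b l) {w : κ → ℝ}
    (hw : ∀ k, 0 < w k) (l : μ) : 0 < rightUpdate K2 b w l :=
  div_pos (hb l) (mulVec_pos (A := K2ᵀ) (fun l k => hK2 k l) hw l)

omit [Fintype κ] in
lemma midUpdate_pos [Nonempty ι] [Nonempty μ] (hK1 : ∀ j k, 0 < K1 j k)
    (hK2 : ∀ k l, 0 < K2 k l) {v : ι → ℝ} {z : μ → ℝ} (hv : ∀ j, 0 < v j) (hz : ∀ l, 0 < z l)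
    (k : κ) : 0 < midUpdate K1 K2 v z k :=
  sqrt_pos.2 (div_pos (mulVec_pos (A := K1ᵀ) (fun k j => hK1 j k) hv k) (mulVec_pos hK2 hz k))

lemma iterate_pos [Nonempty ι] [Nonempty κ] [Nonempty μ] (hK1 : ∀ j k, 0 < K1 j k)
    (hK2 : ∀ k l, 0 < K2 k l) (ha : ∀ j, 0 < a j) (hb : ∀ l, 0 < b l)
    {u1 : ℕ → ι → ℝ} {u2 : ℕ → κ → ℝ} {u3 : ℕ → μ → ℝ} (h1 : ∀ j, 0 < u1 0 j)
    (h2 : ∀ k, 0 < u2 0 k) (h3 : ∀ l, 0 < u3 0 l)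
    (hrec2 : ∀ n, u2 (n + 1) = midUpdate K1 K2 (u1 n) (u3 n))
    (hrec1 : ∀ n, u1 (n + 1) = leftUpdate K1 a (u2 (n + 1)))
    (hrec3 : ∀ n, u3 (n + 1) = rightUpdate K2 b (u2 (n + 1))) (n : ℕ) :
    (∀ j, 0 < u1 n j) ∧ (∀ k, 0 < u2 n k) ∧ (∀ l, 0 < u3 n l) := by
  induction n with
  | zero => exact ⟨h1, h2, h3⟩
  | succ n ih =>
    have h2' := hrec2 n ▸ midUpdate_pos hK1 hK2 ih.1 ih.2.2
    exact ⟨hrec1 n ▸ leftUpdate_pos hK1 ha h2', h2', hrec3 n ▸ rightUpdate_pos hK2 hb h2'⟩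

lemma leftUpdate_dotProduct [Nonempty κ] (hK1 : ∀ j k, 0 < K1 j k) {w : κ → ℝ}
    (hw : ∀ k, 0 < w k) : leftUpdate K1 a w ⬝ᵥ (K1 *ᵥ w⁻¹) = ∑ j, a j :=
  sum_congr rfl fun j _ =>
    div_mul_cancel₀ _ (mulVec_inv_pos hK1 hw j).ne'

lemma dotProduct_mulVec_rightUpdate [Nonempty κ] (hK2 : ∀ k l, 0 < K2 k l) {w : κ → ℝ}
    (hw : ∀ k, 0 < w k) : w ⬝ᵥ (K2 *ᵥ rightUpdate K2 b w) = ∑ l, b l := by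
  rw [dotProduct_mulVec_eq_dotProduct_transpose]
  exact sum_congr rfl fun l _ =>
    div_mul_cancel₀ _ (mulVec_pos (A := K2ᵀ) (fun l k => hK2 k l) hw l).ne'

lemma dual_le_dual_leftUpdate [Nonempty κ] (hK1 : ∀ j k, 0 < K1 j k) (ha : ∀ j, 0 < a j)
    {v : ι → ℝ} {w : κ → ℝ} (z : μ → ℝ) (hv : ∀ j, 0 < v j) (hw : ∀ k, 0 < w k) :
    dual K1 K2 a b v w z ≤ dual K1 K2 a b (leftUpdate K1 a w) w z := by
  have h := dotProduct_log_sub_dotProduct_le (c := K1 *ᵥ w⁻¹) ha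
    (mulVec_inv_pos hK1 hw) hv
  rw [← leftUpdate_dotProduct hK1 hw] at h
  unfold dual
  unfold leftUpdate at h ⊢
  linarith

lemma dual_le_dual_rightUpdate [Nonempty κ] (hK2 : ∀ k l, 0 < K2 k l) (hb : ∀ l, 0 < b l)
    (v : ι → ℝ) {w : κ → ℝ} {z : μ → ℝ} (hw : ∀ k, 0 < w k) (hz : ∀ l, 0 < z l) :
    dual K1 K2 a b v w z ≤ dual K1 K2 a b v w (rightUpdate K2 b w) := by
  have h := dotProduct_log_sub_dotProduct_le hb
    (mulVec_pos (A := K2ᵀ) (fun l k => hK2 k l) hw) hz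
  rw [← dotProduct_mulVec_eq_dotProduct_transpose, ← dotProduct_mulVec_rightUpdate hK2 hw] at h
  unfold dual
  unfold rightUpdate at h ⊢
  linarith

lemma dual_add_hellingerSq_le_dual_step [Nonempty ι] [Nonempty κ] [Nonempty μ]
    (hK1 : ∀ j k, 0 < K1 j k) (hK2 : ∀ k l, 0 < K2 k l) (ha : ∀ j, 0 < a j)
    (hb : ∀ l, 0 < b l) {v : ι → ℝ} {w : κ → ℝ} {z : μ → ℝ} (hv : ∀ j, 0 < v j)
    (hw : ∀ k, 0 < w k) (hz : ∀ l, 0 < z l) :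
    dual K1 K2 a b v w z + hellingerSq ((K1ᵀ *ᵥ v) / w) (w * (K2 *ᵥ z))
      ≤ dual K1 K2 a b (leftUpdate K1 a (midUpdate K1 K2 v z)) (midUpdate K1 K2 v z)
          (rightUpdate K2 b (midUpdate K1 K2 v z)) := by
  have hw' := midUpdate_pos hK1 hK2 hv hz
  calc _ = dual K1 K2 a b v (midUpdate K1 K2 v z) z := (dual_midUpdate hK1 hK2 hv hw hz).symm
    _ ≤ _ := dual_le_dual_leftUpdate hK1 ha z hv hw'
    _ ≤ _ := dual_le_dual_rightUpdate hK2 hb _ hw' hz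

lemma sum_sum_pos [Nonempty ι] [Nonempty κ] (hK1 : ∀ j k, 0 < K1 j k) :
    0 < ∑ j, ∑ k, K1 j k :=
  sum_pos (fun j _ => sum_pos (fun k _ => hK1 j k) univ_nonempty) univ_nonempty

lemma iInf_mul_apply_pos [Nonempty ι] [Nonempty κ] [Nonempty μ]
    (hK1 : ∀ j k, 0 < K1 j k) (hK2 : ∀ k l, 0 < K2 k l) :
    0 < ⨅ p : ι × μ, (K1 * K2) p.1 p.2 := by
  obtain ⟨⟨j, l⟩, hmin⟩ := exists_eq_ciInf_of_finite (f := fun p : ι × μ => (K1 * K2) p.1 p.2)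
  exact hmin ▸ sum_pos (fun k _ => mul_pos (hK1 j k) (hK2 k l)) univ_nonempty

omit [Fintype ι] [Fintype μ] in
lemma mul_apply_le_mulVec_inv_mul_transpose_mulVec (hK1 : ∀ j k, 0 ≤ K1 j k)
    (hK2 : ∀ k l, 0 ≤ K2 k l) {w : κ → ℝ} (hw : ∀ k, 0 < w k) (j : ι) (l : μ) :
    (K1 * K2) j l ≤ (K1 *ᵥ w⁻¹) j * (K2ᵀ *ᵥ w) l := by
  calc (K1 * K2) j l = ∑ k, K1 j k * (w k)⁻¹ * (K2 k l * w k) := by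
        refine sum_congr rfl fun k _ => ?_
        field_simp [(hw k).ne']
    _ ≤ _ := sum_mul_le_sum_mul_sum (fun k => mul_nonneg (hK1 j k) (inv_nonneg.2 (hw k).le))
        (fun k => mul_nonneg (hK2 k l) (hw k).le)

/-- Maximizing over `v` and `z` for fixed `w` leaves a dual value whose log terms are controlled by
`v_j z_l c ≤ v_j z_l (K1 K2)_{jl} ≤ a_j b_l ≤ 1`. -/
lemma dual_le_neg_log_sub_two [Nonempty κ] (hK1 : ∀ j k, 0 < K1 j k)
    (hK2 : ∀ k l, 0 < K2 k l) (ha : ∀ j, 0 < a j) (hb : ∀ l, 0 < b l) (hasum : ∑ j, a j = 1)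
    (hbsum : ∑ l, b l = 1) {c : ℝ} (hc : 0 < c) (hcK : ∀ j l, c ≤ (K1 * K2) j l)
    {v : ι → ℝ} {w : κ → ℝ} {z : μ → ℝ} (hv : ∀ j, 0 < v j) (hw : ∀ k, 0 < w k)
    (hz : ∀ l, 0 < z l) :
    dual K1 K2 a b v w z ≤ -log c - 2 := by
  set v' := leftUpdate K1 a w
  set z' := rightUpdate K2 b w
  have hv' := leftUpdate_pos hK1 ha hw
  have hz' := rightUpdate_pos hK2 hb hw
  have hprod : ∀ j l, v' j * z' l * c ≤ 1 := fun j l => calc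
    v' j * z' l * c ≤ v' j * z' l * ((K1 *ᵥ w⁻¹) j * (K2ᵀ *ᵥ w) l) :=
      mul_le_mul_of_nonneg_left ((hcK j l).trans (mul_apply_le_mulVec_inv_mul_transpose_mulVec
        (fun j k => (hK1 j k).le) (fun k l => (hK2 k l).le) hw j l))
        (mul_pos (hv' j) (hz' l)).le
    _ = a j * b l := by
      have := mulVec_inv_pos hK1 hw j
      have := mulVec_pos (A := K2ᵀ) (fun l k => hK2 k l) hw l
      simp only [v', z', leftUpdate, rightUpdate]
      field_simp
    _ ≤ 1 := mul_le_one₀ (hasum ▸ single_le_sum (fun j _ => (ha j).le) (mem_univ j)) (hb l).le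
        (hbsum ▸ single_le_sum (fun l _ => (hb l).le) (mem_univ l))
  have hlog := dotProduct_log_add_dotProduct_log_le (fun j => (ha j).le) (fun l => (hb l).le)
    hasum hbsum hv' hz' hc hprod
  calc dual K1 K2 a b v w z ≤ dual K1 K2 a b v' w z := dual_le_dual_leftUpdate hK1 ha z hv hw
    _ ≤ dual K1 K2 a b v' w z' := dual_le_dual_rightUpdate hK2 hb v' hw hz
    _ ≤ -log c - 2 := by
      rw [dual, leftUpdate_dotProduct hK1 hw, dotProduct_mulVec_rightUpdate hK2 hw, hasum, hbsum]
      linarith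

lemma dual_init (hasum : ∑ j, a j = 1) (hbsum : ∑ l, b l = 1) (hK1 : ∑ j, ∑ k, K1 j k ≠ 0)
    (hK2 : ∑ k, ∑ l, K2 k l ≠ 0) :
    dual K1 K2 a b (fun _ => 1 / ∑ j, ∑ k, K1 j k) (fun _ => 1) (fun _ => 1 / ∑ k, ∑ l, K2 k l)
      = -log (∑ j, ∑ k, K1 j k) - log (∑ k, ∑ l, K2 k l) - 2 := by
  simp only [dual, dotProduct, mulVec, one_div, log_inv, ← sum_mul, ← mul_sum, hasum, hbsum,
    Pi.inv_apply, inv_one, mul_one, one_mul, inv_mul_cancel₀ hK1, mul_inv_cancel₀ hK2]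
  ring

lemma sum_abs_mulVec_le {P : Matrix ι κ ℝ} (hP : ∀ j k, 0 ≤ P j k) (x : κ → ℝ) :
    ∑ j, |(P *ᵥ x) j| ≤ ∑ k, (Pᵀ *ᵥ 1) k * |x k| := by
  calc ∑ j, |(P *ᵥ x) j| ≤ ∑ j, ∑ k, P j k * |x k| := sum_le_sum fun j _ =>
        (abs_sum_le_sum_abs _ _).trans_eq
          (sum_congr rfl fun k _ => by rw [abs_mul, abs_of_nonneg (hP j k)])
    _ = ∑ k, (Pᵀ *ᵥ 1) k * |x k| := by
      rw [sum_comm]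
      simp [mulVec, dotProduct, sum_mul]

lemma sum_transpose_mulVec_one (P : Matrix ι κ ℝ) : ∑ k, (Pᵀ *ᵥ 1) k = ∑ j, (P *ᵥ 1) j := by
  simp only [mulVec, dotProduct, transpose_apply]
  exact sum_comm

lemma mul_abs_one_sub_sqrt_div {p : ℝ} (hp : 0 < p) (q : ℝ) :
    p * |1 - √(q / p)| = √p * |√p - √q| := by
  have hsp : 0 < √p := sqrt_pos.2 hp
  rw [sqrt_div' _ hp.le, ← abs_of_pos hsp, ← abs_mul, abs_of_pos hsp, ← abs_of_pos hp, ← abs_mul,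
    abs_of_pos hp]
  congr 1
  field_simp
  rw [sq_sqrt hp.le]

lemma mul_abs_one_sub_inv_sqrt_div {q : ℝ} (hq : 0 < q) (p : ℝ) :
    q * |1 - (√(q / p))⁻¹| = √q * |√p - √q| := by
  rw [← sqrt_inv, inv_div, abs_sub_comm (√p), mul_abs_one_sub_sqrt_div hq p]

lemma sq_sum_sqrt_add_mul_abs_sqrt_sub_le {p q : κ → ℝ} (hp : ∀ k, 0 ≤ p k) (hq : ∀ k, 0 ≤ q k)
    (hpsum : ∑ k, p k = 1) (hqsum : ∑ k, q k = 1) :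
    (∑ k, (√(p k) + √(q k)) * |√(p k) - √(q k)|) ^ 2 ≤ 4 * hellingerSq p q := by
  have h4 : ∑ k, (√(p k) + √(q k)) ^ 2 ≤ 4 := calc
    ∑ k, (√(p k) + √(q k)) ^ 2 ≤ ∑ k, 2 * (p k + q k) := sum_le_sum fun k _ => by
      nlinarith [sq_sqrt (hp k), sq_sqrt (hq k), sq_nonneg (√(p k) - √(q k))]
    _ = 4 := by rw [← mul_sum, sum_add_distrib, hpsum, hqsum]; norm_num
  calc _ ≤ (∑ k, (√(p k) + √(q k)) ^ 2) * ∑ k, |√(p k) - √(q k)| ^ 2 :=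
        sum_mul_sq_le_sq_mul_sq _ _ _
    _ ≤ 4 * hellingerSq p q := by
      simp only [sq_abs, hellingerSq]
      exact mul_le_mul_of_nonneg_right h4 (sum_nonneg fun k _ => sq_nonneg _)

lemma sq_stoppingError_le {P1 : Matrix ι κ ℝ} {P2 : Matrix κ μ ℝ} (hP1 : ∀ j k, 0 ≤ P1 j k)
    (hP2 : ∀ k l, 0 ≤ P2 k l) (hp : ∀ k, 0 < (P1ᵀ *ᵥ 1) k) (hq : ∀ k, 0 < (P2 *ᵥ 1) k)
    (ha : P1 *ᵥ 1 = a) (hb : P2ᵀ *ᵥ 1 = b) (hasum : ∑ j, a j = 1) (hbsum : ∑ l, b l = 1)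
    {r : κ → ℝ} (hr : ∀ k, r k = √((P2 *ᵥ 1) k / (P1ᵀ *ᵥ 1) k)) :
    (∑ j, |a j - (P1 *ᵥ r) j| + ∑ l, |b l - (P2ᵀ *ᵥ r⁻¹) l|) ^ 2
      ≤ 4 * hellingerSq (P1ᵀ *ᵥ 1) (P2 *ᵥ 1) := by
  set p := P1ᵀ *ᵥ 1
  set q := P2 *ᵥ 1
  have hpsum : ∑ k, p k = 1 := by rw [sum_transpose_mulVec_one, ha, hasum]
  have hqsum : ∑ k, q k = 1 := by
    have := sum_transpose_mulVec_one P2ᵀ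
    rw [transpose_transpose] at this
    rw [this, hb, hbsum]
  have h1 : ∑ j, |a j - (P1 *ᵥ r) j| ≤ ∑ k, √(p k) * |√(p k) - √(q k)| := by
    rw [← ha]
    calc _ = ∑ j, |(P1 *ᵥ (1 - r)) j| := by simp only [mulVec_sub, Pi.sub_apply]
      _ ≤ _ := sum_abs_mulVec_le hP1 _
      _ = _ := sum_congr rfl fun k _ => by
        simp only [Pi.sub_apply, Pi.one_apply, hr]
        exact mul_abs_one_sub_sqrt_div (hp k) (q k)
  have h2 : ∑ l, |b l - (P2ᵀ *ᵥ r⁻¹) l| ≤ ∑ k, √(q k) * |√(p k) - √(q k)| := by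
    rw [← hb]
    calc _ = ∑ l, |(P2ᵀ *ᵥ (1 - r⁻¹)) l| := by simp only [mulVec_sub, Pi.sub_apply]
      _ ≤ _ := sum_abs_mulVec_le (P := P2ᵀ) (fun l k => hP2 k l) _
      _ = _ := sum_congr rfl fun k _ => by
        simp only [transpose_transpose, Pi.sub_apply, Pi.one_apply, Pi.inv_apply, hr]
        exact mul_abs_one_sub_inv_sqrt_div (hq k) (p k)
  calc _ ≤ (∑ k, (√(p k) + √(q k)) * |√(p k) - √(q k)|) ^ 2 := by
        gcongr
        simp only [add_mul, sum_add_distrib]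
        exact add_le_add h1 h2
    _ ≤ 4 * hellingerSq p q := sq_sum_sqrt_add_mul_abs_sqrt_sub_le (fun k => (hp k).le)
        (fun k => (hq k).le) hpsum hqsum

lemma sq_stoppingError_update_le {m1 m2 m3 : ℕ} [Nonempty (Fin m1)] [Nonempty (Fin m2)]
    [Nonempty (Fin m3)] {K1 : Matrix (Fin m1) (Fin m2) ℝ} {K2 : Matrix (Fin m2) (Fin m3) ℝ}
    {a : Fin m1 → ℝ} {b : Fin m3 → ℝ} (hK1 : ∀ j k, 0 < K1 j k) (hK2 : ∀ k l, 0 < K2 k l)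
    (ha : ∀ j, 0 < a j) (hb : ∀ l, 0 < b l) (hasum : ∑ j, a j = 1) (hbsum : ∑ l, b l = 1)
    {v : Fin m1 → ℝ} {w : Fin m2 → ℝ} {z : Fin m3 → ℝ} (hw : ∀ k, 0 < w k)
    (hv : v = leftUpdate K1 a w) (hz : z = rightUpdate K2 b w) {r : Fin m2 → ℝ}
    (hr : r = fun k => √((indMat2 w K2 z *ᵥ 1) k / ((indMat1 v K1 w)ᵀ *ᵥ 1) k)) :
    (∑ j, |a j - (indMat1 v K1 w *ᵥ r) j| + ∑ l, |b l - ((indMat2 w K2 z)ᵀ *ᵥ r⁻¹) l|) ^ 2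
      ≤ 4 * hellingerSq ((K1ᵀ *ᵥ v) / w) (w * (K2 *ᵥ z)) := by
  have hv' := leftUpdate_pos hK1 ha hw
  have hz' := rightUpdate_pos hK2 hb hw
  rw [← hv] at hv'
  rw [← hz] at hz'
  have h := sq_stoppingError_le (P1 := indMat1 v K1 w) (P2 := indMat2 w K2 z)
    (fun j k => by rw [indMat1_apply]; have := hv' j; have := hK1 j k; have := hw k; positivity)
    (fun k l => by rw [indMat2_apply]; have := hz' l; have := hK2 k l; have := hw k; positivity)
    (fun k => by
      rw [indMat1_transpose_mulVec_one]
      exact div_pos (mulVec_pos (A := K1ᵀ) (fun k j => hK1 j k) hv' k) (hw k))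
    (fun k => by rw [indMat2_mulVec_one]; exact mul_pos (hw k) (mulVec_pos hK2 hz' k))
    (by rw [indMat1_mulVec_one, hv]; ext j; exact div_mul_cancel₀ _ (mulVec_inv_pos hK1 hw j).ne')
    (by
      rw [indMat2_transpose_mulVec_one, hz]
      ext l
      exact div_mul_cancel₀ _ (mulVec_pos (A := K2ᵀ) (fun l k => hK2 k l) hw l).ne')
    hasum hbsum (fun k => congrFun hr k)
  rwa [indMat1_transpose_mulVec_one, indMat2_mulVec_one] at h

lemma exists_small_of_bounded_gain {L H S : ℕ → ℝ} {Λ δ : ℝ} (hδ : 0 < δ)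
    (hgain : ∀ n, L n + H n ≤ L (n + 1)) (hH : ∀ n, 0 ≤ H n) (hbdd : ∀ n, L n ≤ L 0 + Λ)
    (hS : ∀ n, S (n + 1) ^ 2 ≤ 4 * H (n + 1)) :
    ∃ n : ℕ, (n : ℝ) ≤ 1 + 4 / δ ^ 2 * Λ ∧ S n ≤ δ := by
  have hΛ : 0 ≤ Λ := by linarith [hgain 0, hH 0, hbdd 1]
  set N := ⌊4 / δ ^ 2 * Λ⌋₊
  by_contra! hbig
  have hsum : ∑ i ∈ range (N + 1), H (i + 1) ≤ Λ := calc
    _ ≤ ∑ i ∈ range (N + 1), (L (i + 1 + 1) - L (i + 1)) :=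
      sum_le_sum fun i _ => by linarith [hgain (i + 1)]
    _ ≤ Λ := by
      rw [sum_range_sub (fun i => L (i + 1))]
      linarith [hbdd (N + 1 + 1), hgain 0, hH 0]
  have hlarge : ∀ i ∈ range (N + 1), δ ^ 2 / 4 < H (i + 1) := fun i hi => by
    have hi : (i + 1 : ℝ) ≤ 1 + 4 / δ ^ 2 * Λ := by
      have := Nat.floor_le (mul_nonneg (by positivity) hΛ : 0 ≤ 4 / δ ^ 2 * Λ)
      have : (i : ℝ) ≤ N := by exact_mod_cast Nat.lt_succ_iff.1 (mem_range.1 hi)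
      linarith
    have hδS := hbig (i + 1) (by exact_mod_cast hi)
    nlinarith [hS i]
  have hlt := sum_lt_sum_of_nonempty (nonempty_range_iff.2 N.succ_ne_zero) hlarge
  rw [sum_const, card_range, nsmul_eq_mul, Nat.cast_succ] at hlt
  have hN : 4 / δ ^ 2 * Λ < N + 1 := Nat.lt_floor_add_one _
  have hΛeq : 4 / δ ^ 2 * Λ * (δ ^ 2 / 4) = Λ := by field_simp
  linarith [mul_lt_mul_of_pos_right hN (by positivity : (0 : ℝ) < δ ^ 2 / 4)]

end Sinkhorn

open Sinkhorn in
theorem sinkhorn_termination_bound_general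
    {m1 m2 m3 : ℕ} (hm1 : 0 < m1) (hm2 : 0 < m2) (hm3 : 0 < m3)
    (C1 : Matrix (Fin m1) (Fin m2) ℝ) (C2 : Matrix (Fin m2) (Fin m3) ℝ)
    (a : Fin m1 → ℝ) (b : Fin m3 → ℝ)
    (ha : ∀ j, 0 < a j) (hb : ∀ l, 0 < b l)
    (hasum : ∑ j, a j = 1) (hbsum : ∑ l, b l = 1)
    (ε : ℝ)
    (K1 : Matrix (Fin m1) (Fin m2) ℝ) (K2 : Matrix (Fin m2) (Fin m3) ℝ)
    (hK1 : ∀ j k, K1 j k = Real.exp (-C1 j k / ε))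
    (hK2 : ∀ k l, K2 k l = Real.exp (-C2 k l / ε))
    (u1 : ℕ → Fin m1 → ℝ) (u2 : ℕ → Fin m2 → ℝ) (u3 : ℕ → Fin m3 → ℝ)
    (hinit1 : u1 0 = fun _ => 1 / (∑ j, ∑ k, K1 j k))
    (hinit2 : u2 0 = fun _ => 1)
    (hinit3 : u3 0 = fun _ => 1 / (∑ k, ∑ l, K2 k l))
    (hrec2 : ∀ n, u2 (n+1) = fun k => Real.sqrt ((K1ᵀ *ᵥ u1 n) k / (K2 *ᵥ u3 n) k))
    (hrec1 : ∀ n, u1 (n+1) = fun j => a j / (K1 *ᵥ fun k => (u2 (n+1) k)⁻¹) j)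
    (hrec3 : ∀ n, u3 (n+1) = fun l => b l / (K2ᵀ *ᵥ u2 (n+1)) l)
    (Kmin : ℝ)
    (hKmin : Kmin = ⨅ p : Fin m1 × Fin m3, ∑ k, K1 p.1 k * K2 k p.2)
    (r : ℕ → Fin m2 → ℝ)
    (hr : ∀ n, r n = fun k => Real.sqrt
      (((indMat2 (u2 n) K2 (u3 n)) *ᵥ fun _ => 1) k /
        (((indMat1 (u1 n) K1 (u2 n))ᵀ *ᵥ fun _ => 1) k)))
    (S : ℕ → ℝ)
    (hS : ∀ n, S n =
      (∑ j, |a j - (indMat1 (u1 n) K1 (u2 n) *ᵥ r n) j|)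
        + ∑ l, |b l - ((indMat2 (u2 n) K2 (u3 n))ᵀ *ᵥ fun k => (r n k)⁻¹) l|) :
    ∀ δ : ℝ, 0 < δ →
      ∃ n : ℕ, (n : ℝ) ≤ 1 + 4 / δ ^ 2 *
          Real.log ((∑ j, ∑ k, K1 j k) * (∑ k, ∑ l, K2 k l) / Kmin) ∧
        S n ≤ δ := by
  have hK1pos : ∀ j k, 0 < K1 j k := fun j k => (hK1 j k).symm ▸ exp_pos _
  have hK2pos : ∀ k l, 0 < K2 k l := fun k l => (hK2 k l).symm ▸ exp_pos _
  have : Nonempty (Fin m1) := Fin.pos_iff_nonempty.1 hm1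
  have : Nonempty (Fin m2) := Fin.pos_iff_nonempty.1 hm2
  have : Nonempty (Fin m3) := Fin.pos_iff_nonempty.1 hm3
  have hrec2' : ∀ n, u2 (n + 1) = midUpdate K1 K2 (u1 n) (u3 n) := hrec2
  have hrec1' : ∀ n, u1 (n + 1) = leftUpdate K1 a (u2 (n + 1)) := hrec1
  have hrec3' : ∀ n, u3 (n + 1) = rightUpdate K2 b (u2 (n + 1)) := hrec3
  have hs1 := sum_sum_pos hK1pos
  have hs2 := sum_sum_pos hK2pos
  have hpos := iterate_pos hK1pos hK2pos ha hb (hinit1 ▸ fun _ => by positivity)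
    (hinit2 ▸ fun _ => one_pos) (hinit3 ▸ fun _ => by positivity) hrec2' hrec1' hrec3'
  have hKmin_pos : 0 < Kmin := hKmin ▸ iInf_mul_apply_pos hK1pos hK2pos
  have hKmin_le : ∀ j l, Kmin ≤ (K1 * K2) j l := fun j l =>
    hKmin ▸ ciInf_le (Finite.bddBelow_range _) (j, l)
  have hinit := dual_init (K1 := K1) (K2 := K2) hasum hbsum hs1.ne' hs2.ne'
  rw [← hinit1, ← hinit2, ← hinit3] at hinit
  intro δ hδ
  refine exists_small_of_bounded_gain (L := fun n => dual K1 K2 a b (u1 n) (u2 n) (u3 n))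
    (H := fun n => hellingerSq ((K1ᵀ *ᵥ u1 n) / u2 n) (u2 n * (K2 *ᵥ u3 n))) hδ
    (fun n => ?_) (fun n => sum_nonneg fun _ _ => sq_nonneg _) (fun n => ?_) (fun n => ?_)
  · rw [hrec1' n, hrec3' n, hrec2' n]
    exact dual_add_hellingerSq_le_dual_step hK1pos hK2pos ha hb (hpos n).1 (hpos n).2.1 (hpos n).2.2
  · have := dual_le_neg_log_sub_two hK1pos hK2pos ha hb hasum hbsum hKmin_pos hKmin_le
      (hpos n).1 (hpos n).2.1 (hpos n).2.2
    simp only [hinit, log_div (mul_pos hs1 hs2).ne' hKmin_pos.ne', log_mul hs1.ne' hs2.ne']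
    linarith
  · rw [hS]
    exact sq_stoppingError_update_le hK1pos hK2pos ha hb hasum hbsum (hpos (n + 1)).2.1
      (hrec1' n) (hrec3' n) (hr (n + 1))

/-- **Termination bound for the Sinkhorn iteration** (Lem. 4.5): with the fixed initial
vectors, if a dual-optimal triple exists then for every `δ > 0` there is an iteration index
`n ≤ 1 + (4/δ²)·log(‖K¹‖₁‖K²‖₁/K)` at which the stopping criterion `S_n ≤ δ` holds. -/
theorem sinkhorn_termination_bound
    {m1 m2 m3 : ℕ} (hm1 : 0 < m1) (hm2 : 0 < m2) (hm3 : 0 < m3)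
    (C1 : Matrix (Fin m1) (Fin m2) ℝ) (C2 : Matrix (Fin m2) (Fin m3) ℝ)
    (hC1 : ∀ j k, 0 ≤ C1 j k) (hC2 : ∀ k l, 0 ≤ C2 k l)
    (a : Fin m1 → ℝ) (b : Fin m3 → ℝ)
    (ha : ∀ j, 0 < a j) (hb : ∀ l, 0 < b l)
    (hasum : ∑ j, a j = 1) (hbsum : ∑ l, b l = 1)
    (ε : ℝ) (hε : 0 < ε)
    (K1 : Matrix (Fin m1) (Fin m2) ℝ) (K2 : Matrix (Fin m2) (Fin m3) ℝ)
    (hK1 : ∀ j k, K1 j k = Real.exp (-C1 j k / ε))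
    (hK2 : ∀ k l, K2 k l = Real.exp (-C2 k l / ε))
    (u1 : ℕ → Fin m1 → ℝ) (u2 : ℕ → Fin m2 → ℝ) (u3 : ℕ → Fin m3 → ℝ)
    (hinit1 : u1 0 = fun _ => 1 / (∑ j, ∑ k, K1 j k))
    (hinit2 : u2 0 = fun _ => 1)
    (hinit3 : u3 0 = fun _ => 1 / (∑ k, ∑ l, K2 k l))
    (hrec2 : ∀ n, u2 (n+1) = fun k => Real.sqrt ((K1ᵀ *ᵥ u1 n) k / (K2 *ᵥ u3 n) k))
    (hrec1 : ∀ n, u1 (n+1) = fun j => a j / (K1 *ᵥ fun k => (u2 (n+1) k)⁻¹) j)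
    (hrec3 : ∀ n, u3 (n+1) = fun l => b l / (K2ᵀ *ᵥ u2 (n+1)) l)
    (uh1 : Fin m1 → ℝ) (uh2 : Fin m2 → ℝ) (uh3 : Fin m3 → ℝ)
    (hpos1 : ∀ j, 0 < uh1 j) (hpos2 : ∀ k, 0 < uh2 k) (hpos3 : ∀ l, 0 < uh3 l)
    (hopt : ∀ (f1 : Fin m1 → ℝ) (f2 : Fin m2 → ℝ) (f3 : Fin m3 → ℝ),
      dual2 a b ε C1 C2 f1 f2 f3 ≤
        dual2 a b ε C1 C2 (fun j => ε * Real.log (uh1 j))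
          (fun k => ε * Real.log (uh2 k)) (fun l => ε * Real.log (uh3 l)))
    (Kmin : ℝ)
    (hKmin : Kmin = ⨅ p : Fin m1 × Fin m3, ∑ k, K1 p.1 k * K2 k p.2)
    (r : ℕ → Fin m2 → ℝ)
    (hr : ∀ n, r n = fun k => Real.sqrt
      (((indMat2 (u2 n) K2 (u3 n)) *ᵥ fun _ => 1) k /
        (((indMat1 (u1 n) K1 (u2 n))ᵀ *ᵥ fun _ => 1) k)))
    (S : ℕ → ℝ)
    (hS : ∀ n, S n =
      (∑ j, |a j - (indMat1 (u1 n) K1 (u2 n) *ᵥ r n) j|)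
        + ∑ l, |b l - ((indMat2 (u2 n) K2 (u3 n))ᵀ *ᵥ fun k => (r n k)⁻¹) l|) :
    ∀ δ : ℝ, 0 < δ →
      ∃ n : ℕ, (n : ℝ) ≤ 1 + 4 / δ ^ 2 *
          Real.log ((∑ j, ∑ k, K1 j k) * (∑ k, ∑ l, K2 k l) / Kmin) ∧
        S n ≤ δ :=
  sinkhorn_termination_bound_general hm1 hm2 hm3 C1 C2 a b ha hb hasum hbsum ε K1 K2 hK1 hK2 u1 u2
    u3 hinit1 hinit2 hinit3 hrec2 hrec1 hrec3 Kmin hKmin r hr S hS
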